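/- Let D be a rayless, finitely separable, weakly connected digraph and let v, w be distinct vertices with v ∼ w. Then every inclusion-minimal witness for v ∼ w is finite and non-empty. -/

import Mathlib

/-- A digraph with vertex type `V` and edge type `E`, allowing parallel edges. -/
structure MultiDigraph (V : Type*) (E : Type*) where
  tail : E → V
  head : E → V

namespace MultiDigraph

variable {V : Type*} {E : Type*} (D : MultiDigraph V E)

/-- Adjacency in the underlying undirected multigraph. -/
def Adj (u v : V) : Prop :=
  ∃ e : E, (D.tail e = u ∧ D.head e = v) ∨ (D.tail e = v ∧ D.head e = u)

/-- The underlying undirected multigraph is connected. -/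
def WeaklyConnected : Prop :=
  ∀ u v : V, Relation.ReflTransGen D.Adj u v

/-- `B` is the dicut of `D` whose in-shore is `X` (every edge of the cut has its
head in `X`, and no edge leaves `X`). -/
def DicutWith (X : Set V) (B : Set E) : Prop :=
  (∀ e : E, D.tail e ∈ X → D.head e ∈ X) ∧
    B = {e : E | D.tail e ∉ X ∧ D.head e ∈ X}

/-- `B` is a dicut of `D`. -/
def IsDicut (B : Set E) : Prop :=
  ∃ X : Set V, D.DicutWith X B

/-- A dibond is a minimal non-empty dicut. -/
def IsDibond (B : Set E) : Prop :=
  D.IsDicut B ∧ B.Nonempty ∧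
    ∀ B' : Set E, D.IsDicut B' → B'.Nonempty → B' ⊆ B → B' = B

/-- A dijoin meets every non-empty dicut. -/
def Dijoin (F : Set E) : Prop :=
  ∀ B : Set E, D.IsDicut B → B.Nonempty → (F ∩ B).Nonempty

/-- A finitary dijoin meets every non-empty finite dicut. -/
def FinitaryDijoin (F : Set E) : Prop :=
  ∀ B : Set E, D.IsDicut B → B.Finite → B.Nonempty → (F ∩ B).Nonempty

/-- Two dicuts are nested if they have witnessing sides one of which is
`⊆`-comparable with a side of the other. -/
def NestedDicuts (B₁ B₂ : Set E) : Prop :=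
  ∃ X₁ X₂ : Set V, D.DicutWith X₁ B₁ ∧ D.DicutWith X₂ B₂ ∧
    (X₁ ⊆ X₂ ∨ X₂ ⊆ X₁ ∨ X₁ ⊆ X₂ᶜ ∨ X₂ᶜ ⊆ X₁)

/-- An optimal pair: a set `ℬ` of pairwise disjoint finite dicuts and a finitary
dijoin `F ⊆ ⋃ ℬ` meeting each member of `ℬ` in exactly one edge. -/
def OptimalPair (F : Set E) (ℬ : Set (Set E)) : Prop :=
  (∀ B ∈ ℬ, D.IsDicut B ∧ B.Finite) ∧
    ℬ.Pairwise Disjoint ∧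
    D.FinitaryDijoin F ∧
    F ⊆ ⋃₀ ℬ ∧
    ∀ B ∈ ℬ, (F ∩ B).ncard = 1

/-- A nested optimal pair. -/
def NestedOptimalPair (F : Set E) (ℬ : Set (Set E)) : Prop :=
  D.OptimalPair F ℬ ∧ ℬ.Pairwise D.NestedDicuts

/-- The underlying multigraph contains no ray. -/
def Rayless : Prop :=
  ¬ ∃ f : ℕ → V, Function.Injective f ∧ ∀ n : ℕ, D.Adj (f n) (f (n + 1))

/-- The (undirected) cut of `D` with side `X`: all edges with exactly one
endpoint in `X`. -/
def cutEdges (X : Set V) : Set E :=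
  {e : E | (D.tail e ∈ X ∧ D.head e ∉ X) ∨ (D.tail e ∉ X ∧ D.head e ∈ X)}

/-- Any two distinct vertices are separated by a finite cut. -/
def FinitelySeparable : Prop :=
  ∀ v w : V, v ≠ w → ∃ X : Set V, (D.cutEdges X).Finite ∧ v ∈ X ∧ w ∉ X

/-- Any two distinct vertices lie on different sides of some finite dicut. -/
def FinitelyDiseparable : Prop :=
  ∀ v w : V, v ≠ w → ∃ (X : Set V) (B : Set E), D.DicutWith X B ∧ B.Finite ∧
    ((v ∈ X ∧ w ∉ X) ∨ (v ∉ X ∧ w ∈ X))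

/-- The underlying multigraph is 2-connected: it is connected and deleting any
single vertex keeps it connected. -/
def UnderlyingTwoConnected : Prop :=
  D.WeaklyConnected ∧ ∀ x u v : V, u ≠ x → v ≠ x →
    Relation.ReflTransGen (fun a b => a ≠ x ∧ b ≠ x ∧ D.Adj a b) u v

/-- `v ∼ w`: no finite dicut of `D` separates `v` and `w`. -/
def Sim (v w : V) : Prop :=
  ∀ (X : Set V) (B : Set E), D.DicutWith X B → B.Finite → (v ∈ X ↔ w ∈ X)

/-- `W` is a witness for `v ∼ w`: it meets every finite cut separating `v`
and `w` in both directions. -/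
def Witness (v w : V) (W : Set E) : Prop :=
  ∀ X : Set V, (D.cutEdges X).Finite → v ∈ X → w ∉ X →
    (∃ e ∈ W, D.tail e ∈ X ∧ D.head e ∉ X) ∧
    (∃ e ∈ W, D.tail e ∉ X ∧ D.head e ∈ X)

end MultiDigraph

/-!
A witness is the union of a part crossing every finite cut between `v` and `w` out of the side of
`v` and a part crossing it out of the side of `w`, so a minimal witness is the union of two minimal
such "forward witnesses", and it suffices to show that these are finite.

Every edge `e` of a minimal forward witness `F` is the only edge of `F` leaving some side `X ∋ v`
of a finite cut separating `v` from `w`, and such sides uncross: for two edges, `X ∩ Y` and `X ∪ Y`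
are again such sides, one for each edge. If `F` were infinite, a Ramsey-type extraction would give
edges `e₀, e₁, …` with sides `X₀ ⊆ X₁ ⊆ ⋯` (after reversing all edges if necessary). Minimality
joins the head of `eₙ` to the tail of `eₙ₊₁` by a path inside `Xₙ₊₁ \ Xₙ`, and these paths together
with the edges `eₙ₊₁` form a ray.
-/

section

variable {α : Type*} {r : α → α → Prop}

theorem List.exists_nodup_isChain_of_relationReflTransGen {a b : α}
    (h : Relation.ReflTransGen r a b) :
    ∃ l : List α, l.IsChain r ∧ l.head? = some a ∧ l.getLast? = some b ∧ l.Nodup := by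
  induction h using Relation.ReflTransGen.head_induction_on with
  | refl => exact ⟨[b], .singleton b, rfl, rfl, nodup_singleton b⟩
  | @head a c hac _ ih =>
    obtain ⟨l, hchain, hhead, hlast, hnodup⟩ := ih
    by_cases ha : a ∈ l
    · obtain ⟨s, t, rfl⟩ := append_of_mem ha
      refine ⟨a :: t, hchain.right_of_append, rfl, ?_, hnodup.of_append_right⟩
      rwa [getLast?_append_of_ne_nil _ (cons_ne_nil a t)] at hlast
    · refine ⟨a :: l, hchain.cons (by simpa [hhead] using hac), rfl, ?_,
        nodup_cons.2 ⟨ha, hnodup⟩⟩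
      simp [getLast?_cons, hlast]

def concatUpTo (P : ℕ → List α) : ℕ → List α
  | 0 => P 0
  | n + 1 => concatUpTo P n ++ P (n + 1)

variable {P : ℕ → List α}

theorem lt_length_concatUpTo (hne : ∀ n, P n ≠ []) (n : ℕ) : n < (concatUpTo P n).length := by
  induction n with
  | zero => exact List.length_pos_iff.2 (hne 0)
  | succ n ih =>
    have := List.length_pos_iff.2 (hne (n + 1))
    rw [concatUpTo, List.length_append]
    omega

theorem concatUpTo_prefix {m n : ℕ} (h : m ≤ n) : concatUpTo P m <+: concatUpTo P n := by
  induction n, h using Nat.le_induction with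
  | base => exact List.prefix_refl _
  | succ n _ ih => exact ih.trans (List.prefix_append _ _)

theorem exists_mem_of_mem_concatUpTo {n : ℕ} {x : α} (hx : x ∈ concatUpTo P n) :
    ∃ i ≤ n, x ∈ P i := by
  induction n with
  | zero => exact ⟨0, le_rfl, hx⟩
  | succ n ih =>
    rcases List.mem_append.1 hx with hx | hx
    · obtain ⟨i, hi, hxi⟩ := ih hx
      exact ⟨i, hi.trans n.le_succ, hxi⟩
    · exact ⟨n + 1, le_rfl, hx⟩

theorem isChain_concatUpTo (hne : ∀ n, P n ≠ []) (hchain : ∀ n, (P n).IsChain r)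
    (hlink : ∀ n, ∀ x ∈ (P n).getLast?, ∀ y ∈ (P (n + 1)).head?, r x y) (n : ℕ) :
    (concatUpTo P n).IsChain r ∧ (concatUpTo P n).getLast? = (P n).getLast? := by
  induction n with
  | zero => exact ⟨hchain 0, rfl⟩
  | succ n ih =>
    rw [concatUpTo, List.isChain_append, List.getLast?_append_of_ne_nil _ (hne _), ih.2]
    exact ⟨⟨ih.1, hchain _, hlink n⟩, rfl⟩

theorem nodup_concatUpTo (hnodup : ∀ n, (P n).Nodup)
    (hdisj : Pairwise fun m n => (P m).Disjoint (P n)) (n : ℕ) : (concatUpTo P n).Nodup := by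
  induction n with
  | zero => exact hnodup 0
  | succ n ih =>
    refine List.nodup_append.2 ⟨ih, hnodup _, fun x hx y hy hxy => ?_⟩
    obtain ⟨i, hi, hxi⟩ := exists_mem_of_mem_concatUpTo hx
    exact hdisj (by omega : i ≠ n + 1) hxi (hxy ▸ hy)

theorem exists_injective_chain_of_concat (hne : ∀ n, P n ≠ [])
    (hchain : ∀ n, (P n).IsChain r) (hnodup : ∀ n, (P n).Nodup)
    (hdisj : Pairwise fun m n => (P m).Disjoint (P n))
    (hlink : ∀ n, ∀ x ∈ (P n).getLast?, ∀ y ∈ (P (n + 1)).head?, r x y) :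
    ∃ f : ℕ → α, Function.Injective f ∧ ∀ k, r (f k) (f (k + 1)) := by
  have hlen := lt_length_concatUpTo hne
  have hget : ∀ k n (h : k ≤ n), (concatUpTo P k)[k]'(hlen k) =
      (concatUpTo P n)[k]'((hlen k).trans_le (concatUpTo_prefix h).length_le) :=
    fun k n h => (concatUpTo_prefix h).getElem (hlen k)
  refine ⟨fun k => (concatUpTo P k)[k]'(hlen k), fun k k' h => ?_, fun k => ?_⟩
  · dsimp only at h
    rw [hget k _ (le_max_left k k'), hget k' _ (le_max_right k k')] at h
    exact (nodup_concatUpTo hnodup hdisj _).getElem_inj_iff.1 h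
  · dsimp only
    rw [hget k (k + 1) k.le_succ]
    exact List.isChain_iff_getElem.1 (isChain_concatUpTo hne hchain hlink (k + 1)).1 k (hlen _)

theorem exists_injective_chain_of_disjoint_paths {S : ℕ → Set α}
    (hS : Pairwise fun m n => Disjoint (S m) (S n)) {a b : ℕ → α} (ha : ∀ n, a n ∈ S n)
    (hpath : ∀ n, Relation.ReflTransGen (fun x y => r x y ∧ y ∈ S n) (a n) (b n))
    (hstep : ∀ n, r (b n) (a (n + 1))) :
    ∃ f : ℕ → α, Function.Injective f ∧ ∀ k, r (f k) (f (k + 1)) := by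
  choose P hchain hhead hlast hnodup using
    fun n => List.exists_nodup_isChain_of_relationReflTransGen (hpath n)
  have hne : ∀ n, P n ≠ [] := fun n h => by simpa [h] using hhead n
  have hmem : ∀ n, ∀ x ∈ P n, x ∈ S n := fun n =>
    (hchain n).induction (· ∈ S n) _ (fun _ _ h _ => h.2)
      (fun hP => (List.head_eq_iff_head?_eq_some hP).2 (hhead n) ▸ ha n)
  refine exists_injective_chain_of_concat hne (fun n => (hchain n).imp fun _ _ h => h.1)
    hnodup (fun m n hmn x hxm hxn => (hS hmn).ne_of_mem (hmem m x hxm) (hmem n x hxn) rfl) ?_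
  intro n x hx y hy
  rw [hlast, Option.mem_some_iff] at hx
  rw [hhead, Option.mem_some_iff] at hy
  exact hx ▸ hy ▸ hstep n

theorem IsChain.sInter_inter_nonempty {c : Set (Set α)} (hc : IsChain (· ⊆ ·) c)
    (hne : c.Nonempty) {T : Set α} (hT : T.Finite) (h : ∀ F ∈ c, (F ∩ T).Nonempty) :
    (⋂₀ c ∩ T).Nonempty := by
  by_contra hempty
  have hcover : (hT.toFinset : Set α) ⊆ ⋃ F ∈ c, Fᶜ := fun t ht => by
    rw [Set.Finite.coe_toFinset] at ht
    simpa [Set.mem_sInter] using fun h' => hempty ⟨t, h', ht⟩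
  have hdir : DirectedOn (fun F G : Set α => Fᶜ ⊆ Gᶜ) c := fun F hF G hG => by
    rcases hc.total hF hG with h | h
    · exact ⟨F, hF, le_rfl, Set.compl_subset_compl.2 h⟩
    · exact ⟨G, hG, Set.compl_subset_compl.2 h, le_rfl⟩
  obtain ⟨F, hF, hTF⟩ := hdir.exists_mem_subset_of_finset_subset_biUnion hne hcover
  obtain ⟨t, htF, htT⟩ := h F hF
  exact hTF (by simpa using htT) htF

end

namespace MultiDigraph

variable {V E : Type*}

section Definitions

variable (D : MultiDigraph V E)

def reverse : MultiDigraph V E := ⟨D.head, D.tail⟩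

def Leaves (X : Set V) (e : E) : Prop :=
  D.tail e ∈ X ∧ D.head e ∉ X

def SeparatingSide (v w : V) (X : Set V) : Prop :=
  (D.cutEdges X).Finite ∧ v ∈ X ∧ w ∉ X

def ForwardWitness (v w : V) (F : Set E) : Prop :=
  ∀ X, D.SeparatingSide v w X → ∃ e ∈ F, D.Leaves X e

structure SoleExit (v w : V) (F : Set E) (X : Set V) (e : E) : Prop where
  separatingSide : D.SeparatingSide v w X
  mem : e ∈ F
  leaves : D.Leaves X e
  eq_of_leaves : ∀ f ∈ F, D.Leaves X f → f = e

def Precedes (v w : V) (F : Set E) (e f : E) : Prop :=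
  ∃ Y, D.SoleExit v w F Y f ∧ D.tail e ∈ Y

end Definitions

variable {D : MultiDigraph V E} {v w : V} {F : Set E} {X Y : Set V} {e f : E}

theorem adj_symm {x y : V} : D.Adj x y → D.Adj y x
  | ⟨e, h⟩ => ⟨e, h.symm⟩

theorem adj_tail_head (e : E) : D.Adj (D.tail e) (D.head e) :=
  ⟨e, Or.inl ⟨rfl, rfl⟩⟩

theorem cutEdges_compl (X : Set V) : D.cutEdges Xᶜ = D.cutEdges X := by
  ext e
  simp only [cutEdges, Set.mem_ofPred_eq, Set.mem_compl_iff, not_not]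
  tauto

theorem reverse_cutEdges (X : Set V) : D.reverse.cutEdges X = D.cutEdges X := by
  ext e
  simp only [cutEdges, reverse, Set.mem_ofPred_eq]
  tauto

theorem reverse_adj {x y : V} : D.reverse.Adj x y ↔ D.Adj x y :=
  exists_congr fun _ => by simp only [reverse]; tauto

theorem Rayless.reverse (h : D.Rayless) : D.reverse.Rayless := fun ⟨f, hinj, hadj⟩ =>
  h ⟨f, hinj, fun n => reverse_adj.1 (hadj n)⟩

theorem separatingSide_compl : D.SeparatingSide w v Xᶜ ↔ D.SeparatingSide v w X := by
  simp only [SeparatingSide, cutEdges_compl, Set.mem_compl_iff, not_not]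
  tauto

theorem reverse_leaves_compl : D.reverse.Leaves Xᶜ e ↔ D.Leaves X e := by
  simp only [Leaves, reverse, Set.mem_compl_iff, not_not]
  tauto

theorem reverse_separatingSide_compl :
    D.reverse.SeparatingSide w v Xᶜ ↔ D.SeparatingSide v w X := by
  simp only [SeparatingSide, reverse_cutEdges, cutEdges_compl, Set.mem_compl_iff, not_not]
  tauto

theorem reverse_forwardWitness : D.reverse.ForwardWitness w v = D.ForwardWitness v w := by
  funext F
  refine propext (compl_surjective.forall.trans (forall_congr' fun X => ?_))
  simp only [reverse_separatingSide_compl, reverse_leaves_compl]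

theorem SoleExit.reverse_compl (h : D.SoleExit v w F X e) : D.reverse.SoleExit w v F Xᶜ e :=
  ⟨reverse_separatingSide_compl.2 h.separatingSide, h.mem, reverse_leaves_compl.2 h.leaves,
    fun f hf hfX => h.eq_of_leaves f hf (reverse_leaves_compl.1 hfX)⟩

theorem witness_iff {W : Set E} :
    D.Witness v w W ↔ D.ForwardWitness v w W ∧ D.ForwardWitness w v W := by
  rw [ForwardWitness, ForwardWitness,
    compl_surjective.forall (p := fun X => D.SeparatingSide w v X → ∃ e ∈ W, D.Leaves X e)]
  simp only [separatingSide_compl, ← forall_and]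
  simp only [Witness, SeparatingSide, Leaves, Set.mem_compl_iff, not_not, and_imp]

theorem ForwardWitness.mono {G : Set E} (h : D.ForwardWitness v w F) (hFG : F ⊆ G) :
    D.ForwardWitness v w G := fun X hX =>
  let ⟨e, he, heX⟩ := h X hX
  ⟨e, hFG he, heX⟩

theorem ForwardWitness.exists_minimal_subset (hF : D.ForwardWitness v w F) :
    ∃ F' ⊆ F, Minimal (D.ForwardWitness v w) F' := by
  refine zorn_superset_nonempty {F | D.ForwardWitness v w F} (fun c hc hchain hne =>
    ⟨⋂₀ c, fun X hX => ?_, fun F hF => Set.sInter_subset_of_mem hF⟩) F hF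
  obtain ⟨e, he, heX⟩ := hchain.sInter_inter_nonempty hne (T := {e | D.Leaves X e})
    (hX.1.subset fun e he => Or.inl he) fun F hF => hc hF X hX
  exact ⟨e, he, heX⟩

theorem SeparatingSide.inter (hX : D.SeparatingSide v w X) (hY : D.SeparatingSide v w Y) :
    D.SeparatingSide v w (X ∩ Y) := by
  refine ⟨(hX.1.union hY.1).subset fun e he => ?_, ⟨hX.2.1, hY.2.1⟩, fun h => hX.2.2 h.1⟩
  simp only [cutEdges, Set.mem_ofPred_eq, Set.mem_inter_iff, Set.mem_union] at he ⊢
  tauto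

theorem SeparatingSide.union (hX : D.SeparatingSide v w X) (hY : D.SeparatingSide v w Y) :
    D.SeparatingSide v w (X ∪ Y) := by
  refine ⟨(hX.1.union hY.1).subset fun e he => ?_, Or.inl hX.2.1, fun h => h.elim hX.2.2 hY.2.2⟩
  simp only [cutEdges, Set.mem_ofPred_eq, Set.mem_union] at he ⊢
  tauto

theorem Leaves.of_inter (h : D.Leaves (X ∩ Y) e) : D.Leaves X e ∨ D.Leaves Y e := by
  simp only [Leaves, Set.mem_inter_iff] at h ⊢
  tauto

theorem Leaves.of_union (h : D.Leaves (X ∪ Y) e) : D.Leaves X e ∨ D.Leaves Y e := by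
  simp only [Leaves, Set.mem_union] at h ⊢
  tauto

theorem Leaves.of_inter_of_union (hI : D.Leaves (X ∩ Y) e) (hU : D.Leaves (X ∪ Y) e) :
    D.Leaves X e ∧ D.Leaves Y e := by
  simp only [Leaves, Set.mem_inter_iff, Set.mem_union] at hI hU ⊢
  tauto

theorem SoleExit.inter_union_of_leaves_inter (hF : D.ForwardWitness v w F)
    (hX : D.SoleExit v w F X e) (hY : D.SoleExit v w F Y f) (hef : e ≠ f)
    (he : D.Leaves (X ∩ Y) e) :
    D.SoleExit v w F (X ∩ Y) e ∧ D.SoleExit v w F (X ∪ Y) f := by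
  have hmem : ∀ g ∈ F, D.Leaves X g ∨ D.Leaves Y g → g = e ∨ g = f := fun g hg h =>
    h.imp (hX.eq_of_leaves g hg) (hY.eq_of_leaves g hg)
  have hboth : ∀ g ∈ F, D.Leaves (X ∩ Y) g → ¬ D.Leaves (X ∪ Y) g := fun g hg hI hU =>
    have h := hI.of_inter_of_union hU
    hef ((hX.eq_of_leaves g hg h.1).symm.trans (hY.eq_of_leaves g hg h.2))
  obtain ⟨g, hg, hgU⟩ := hF _ (hX.separatingSide.union hY.separatingSide)
  have hfU : D.Leaves (X ∪ Y) f := by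
    rcases hmem g hg hgU.of_union with rfl | rfl
    · exact absurd hgU (hboth g hg he)
    · exact hgU
  refine ⟨⟨hX.separatingSide.inter hY.separatingSide, hX.mem, he, fun g hg hgI => ?_⟩,
    ⟨hX.separatingSide.union hY.separatingSide, hY.mem, hfU, fun g hg hgU => ?_⟩⟩
  · exact (hmem g hg hgI.of_inter).resolve_right fun h => hboth g hg hgI (h ▸ hfU)
  · exact (hmem g hg hgU.of_union).resolve_left fun h => hboth g hg (h ▸ he) hgU

theorem SoleExit.inter_union (hF : D.ForwardWitness v w F) (hX : D.SoleExit v w F X e)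
    (hY : D.SoleExit v w F Y f) (hef : e ≠ f) :
    (D.SoleExit v w F (X ∩ Y) e ∧ D.SoleExit v w F (X ∪ Y) f) ∨
      (D.SoleExit v w F (X ∩ Y) f ∧ D.SoleExit v w F (X ∪ Y) e) := by
  obtain ⟨g, hg, hgI⟩ := hF _ (hX.separatingSide.inter hY.separatingSide)
  rcases hgI.of_inter.imp (hX.eq_of_leaves g hg) (hY.eq_of_leaves g hg) with rfl | rfl
  · exact .inl (hX.inter_union_of_leaves_inter hF hY hef hgI)
  · have h := hY.inter_union_of_leaves_inter hF hX hef.symm (Set.inter_comm X Y ▸ hgI)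
    rw [Set.inter_comm, Set.union_comm]
    exact .inr h

theorem exists_soleExit (hF : Minimal (D.ForwardWitness v w) F) (he : e ∈ F) :
    ∃ X, D.SoleExit v w F X e := by
  have hnot : ¬ D.ForwardWitness v w (F \ {e}) := fun h =>
    ((Set.ext_iff.1 (hF.eq_of_subset h Set.sdiff_subset) e).2 he).2 rfl
  simp only [ForwardWitness, not_forall, not_exists, not_and] at hnot
  obtain ⟨X, hX, hno⟩ := hnot
  have hsole : ∀ g ∈ F, D.Leaves X g → g = e := fun g hg hgX =>
    not_not.1 fun hge => hno g ⟨hg, hge⟩ hgX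
  obtain ⟨g, hg, hgX⟩ := hF.1 X hX
  exact ⟨X, hX, he, hsole g hg hgX ▸ hgX, hsole⟩

theorem SoleExit.tail_mem_iff_head_mem (hF : Minimal (D.ForwardWitness v w) F)
    (hX : D.SoleExit v w F X e) (hf : f ∈ F) (hfe : f ≠ e) :
    D.tail f ∈ X ↔ D.head f ∈ X := by
  refine ⟨fun ht => not_not.1 fun hh => hfe (hX.eq_of_leaves f hf ⟨ht, hh⟩), fun hh => ?_⟩
  obtain ⟨Y, hY⟩ := exists_soleExit hF hf
  rcases hX.inter_union hF.1 hY hfe.symm with ⟨-, hU⟩ | ⟨hI, -⟩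
  · exact absurd (Or.inl hh) hU.leaves.2
  · exact hI.leaves.1.1

theorem SoleExit.exists_superset (hF : D.ForwardWitness v w F) (hX : D.SoleExit v w F X e)
    (hef : e ≠ f) (h : D.Precedes v w F e f) : ∃ Y, X ⊆ Y ∧ D.SoleExit v w F Y f := by
  obtain ⟨Z, hZ, heZ⟩ := h
  rcases hX.inter_union hF hZ hef with ⟨-, hU⟩ | ⟨-, hU⟩
  · exact ⟨X ∪ Z, Set.subset_union_left, hU⟩
  · exact absurd (hZ.eq_of_leaves e hX.mem ⟨heZ, fun h => hU.leaves.2 (Or.inr h)⟩) hef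

theorem reverse_precedes_of_not_precedes (hF : Minimal (D.ForwardWitness v w) F) (he : e ∈ F)
    (hf : f ∈ F) (hef : e ≠ f) (h : ¬ D.Precedes v w F e f) : D.reverse.Precedes w v F e f := by
  obtain ⟨Y, hY⟩ := exists_soleExit hF hf
  have htail : D.tail e ∉ Y := fun h' => h ⟨Y, hY, h'⟩
  exact ⟨Yᶜ, hY.reverse_compl, (hY.tail_mem_iff_head_mem hF he hef).not.1 htail⟩

theorem exists_monotone_soleExit (hF : Minimal (D.ForwardWitness v w) F) {e : ℕ → E}
    (he : ∀ n, e n ∈ F) (hne : ∀ n, e n ≠ e (n + 1))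
    (h : ∀ n, D.Precedes v w F (e n) (e (n + 1))) :
    ∃ X : ℕ → Set V, Monotone X ∧ ∀ n, D.SoleExit v w F (X n) (e n) := by
  obtain ⟨X₀, hX₀⟩ := exists_soleExit hF (he 0)
  choose! next hnext using fun n (X : Set V) (hX : D.SoleExit v w F X (e n)) =>
    hX.exists_superset hF.1 (hne n) (h n)
  let X : ℕ → Set V := fun n => Nat.rec X₀ next n
  have hX : ∀ n, D.SoleExit v w F (X n) (e n) := by
    intro n
    induction n with
    | zero => exact hX₀
    | succ n ih => exact (hnext n _ ih).2
  exact ⟨X, monotone_nat_of_le_succ fun n => (hnext n _ (hX n)).1, hX⟩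

theorem cutEdges_union_subset {K : Set V} (hKY : K ⊆ Y)
    (hK : ∀ x ∈ K, ∀ y ∈ Y \ X, D.Adj x y → y ∈ K) :
    D.cutEdges (X ∪ K) ⊆ D.cutEdges X ∪ D.cutEdges Y := by
  intro g hg
  have h₁ : D.tail g ∈ K → D.head g ∈ Y \ X → D.head g ∈ K := fun hx hy =>
    hK _ hx _ hy (adj_tail_head g)
  have h₂ : D.head g ∈ K → D.tail g ∈ Y \ X → D.tail g ∈ K := fun hx hy =>
    hK _ hx _ hy (adj_symm (adj_tail_head g))
  have h₃ := @hKY (D.tail g)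
  have h₄ := @hKY (D.head g)
  simp only [cutEdges, Set.mem_ofPred_eq, Set.mem_union, Set.mem_sdiff] at hg h₁ h₂ ⊢
  tauto

theorem SoleExit.reflTransGen_head_tail (hF : Minimal (D.ForwardWitness v w) F)
    (hX : D.SoleExit v w F X e) (hY : D.SoleExit v w F Y f) (hef : e ≠ f) (hXY : X ⊆ Y) :
    Relation.ReflTransGen (fun x y => D.Adj x y ∧ y ∈ Y \ X) (D.head e) (D.tail f) := by
  -- `K` is the part of `Y \ X` reachable from `head e`: the only edge of `F` that can leave the
  -- side `X ∪ K` is `f`, and only with its tail in `K`.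
  let K := {z | Relation.ReflTransGen (fun x y => D.Adj x y ∧ y ∈ Y \ X) (D.head e) z}
  have he : D.head e ∈ Y \ X :=
    ⟨(hY.tail_mem_iff_head_mem hF hX.mem hef).1 (hXY hX.leaves.1), hX.leaves.2⟩
  have hKYX : K ⊆ Y \ X := fun z hz => by
    rcases hz.cases_tail with rfl | ⟨_, _, _, hz⟩
    exacts [he, hz]
  have hK : ∀ x ∈ K, ∀ y ∈ Y \ X, D.Adj x y → y ∈ K := fun x hx y hy hxy =>
    Relation.ReflTransGen.tail hx ⟨hxy, hy⟩
  have hsep : D.SeparatingSide v w (X ∪ K) :=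
    ⟨(hX.separatingSide.1.union hY.separatingSide.1).subset
      (cutEdges_union_subset (hKYX.trans Set.sdiff_subset) hK),
      Or.inl hX.separatingSide.2.1,
      fun h => hY.separatingSide.2.2 (h.elim (@hXY w) fun h => (hKYX h).1)⟩
  obtain ⟨g, hg, htail, hhead⟩ := hF.1 _ hsep
  have hgK : D.tail g ∈ K := htail.resolve_left fun h =>
    have := hX.eq_of_leaves g hg ⟨h, fun h' => hhead (Or.inl h')⟩
    hhead (Or.inr (this ▸ Relation.ReflTransGen.refl))
  obtain rfl : g = f := not_not.1 fun hgf =>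
    hhead <| Or.inr <| hK _ hgK _
      ⟨(hY.tail_mem_iff_head_mem hF hg hgf).1 (hKYX hgK).1, fun h => hhead (Or.inl h)⟩
      (adj_tail_head g)
  exact hgK

theorem not_rayless_of_precedes_chain (hF : Minimal (D.ForwardWitness v w) F) {e : ℕ → E}
    (he : ∀ n, e n ∈ F) (hne : ∀ n, e n ≠ e (n + 1))
    (h : ∀ n, D.Precedes v w F (e n) (e (n + 1))) : ¬ D.Rayless := by
  obtain ⟨X, hXmono, hX⟩ := exists_monotone_soleExit hF he hne h
  have hdisj : Pairwise fun m n => Disjoint (X (m + 1) \ X m) (X (n + 1) \ X n) :=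
    (pairwise_disjoint_on fun n => X (n + 1) \ X n).2 fun m n hmn =>
      Set.disjoint_left.2 fun _ hm hn => hn.2 (hXmono hmn hm.1)
  have hhead : ∀ n, D.head (e n) ∈ X (n + 1) \ X n := fun n =>
    ⟨((hX (n + 1)).tail_mem_iff_head_mem hF (he n) (hne n)).1 (hXmono n.le_succ (hX n).leaves.1),
      (hX n).leaves.2⟩
  exact fun hray => hray <| exists_injective_chain_of_disjoint_paths hdisj hhead
    (fun n => (hX n).reflTransGen_head_tail hF (hX (n + 1)) (hne n) (hXmono n.le_succ))
    fun n => adj_tail_head (e (n + 1))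

theorem Rayless.finite_of_minimal_forwardWitness (hray : D.Rayless)
    (hF : Minimal (D.ForwardWitness v w) F) : F.Finite := by
  refine Set.not_infinite.1 fun hinf : F.Infinite => ?_
  let φ := Set.Infinite.natEmbedding F hinf
  let e : ℕ → E := fun n => φ n
  have he : ∀ n, e n ∈ F := fun n => (φ n).2
  have hinj : e.Injective := Subtype.val_injective.comp φ.injective
  obtain ⟨g, hg⟩ := exists_increasing_or_nonincreasing_subseq' (D.Precedes v w F) e
  have hne : ∀ n, e (g n) ≠ e (g (n + 1)) := fun n =>
    hinj.ne (g.injective.ne n.succ_ne_self.symm)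
  rcases hg with hg | hg
  · exact not_rayless_of_precedes_chain hF (fun _ => he _) hne hg hray
  · -- A sequence along which `Precedes` always fails is a `Precedes`-chain in the reverse
    -- digraph, whose sole-exit sides are the complements of those of `D`.
    have hrev : ∀ n, D.reverse.Precedes w v F (e (g n)) (e (g (n + 1))) := fun n =>
      reverse_precedes_of_not_precedes hF (he _) (he _) (hne n) (hg n (n + 1) n.lt_succ_self)
    exact not_rayless_of_precedes_chain (reverse_forwardWitness (D := D) ▸ hF) (fun _ => he _)
      hne hrev hray.reverse

end MultiDigraph

theorem minimal_witness_finite_of_rayless_general {V E : Type*}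
    (D : MultiDigraph V E) (hray : D.Rayless)
    (hsep : D.FinitelySeparable)
    (v w : V) (hne : v ≠ w) (W : Set E)
    (hW : D.Witness v w W)
    (hmin : ∀ W' : Set E, W' ⊆ W → D.Witness v w W' → W' = W) :
    W.Finite ∧ W.Nonempty := by
  rw [MultiDigraph.witness_iff] at hW
  obtain ⟨F, hFW, hF⟩ := hW.1.exists_minimal_subset
  obtain ⟨B, hBW, hB⟩ := hW.2.exists_minimal_subset
  have hFB : F ∪ B = W := hmin _ (Set.union_subset hFW hBW) <| MultiDigraph.witness_iff.2
    ⟨hF.1.mono Set.subset_union_left, hB.1.mono Set.subset_union_right⟩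
  refine ⟨hFB ▸ (hray.finite_of_minimal_forwardWitness hF).union
    (hray.finite_of_minimal_forwardWitness hB), ?_⟩
  obtain ⟨X, hX⟩ := hsep v w hne
  obtain ⟨e, he, -⟩ := hW.1 X hX
  exact ⟨e, he⟩

/-- In a rayless, finitely separable, weakly connected digraph, every
inclusion-minimal witness for `v ∼ w` (for distinct vertices `v`, `w` with
`v ∼ w`) is finite and non-empty. -/
theorem minimal_witness_finite_of_rayless {V E : Type*}
    (D : MultiDigraph V E) (hray : D.Rayless)
    (hsep : D.FinitelySeparable) (hD : D.WeaklyConnected)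
    (v w : V) (hne : v ≠ w) (hvw : D.Sim v w) (W : Set E)
    (hW : D.Witness v w W)
    (hmin : ∀ W' : Set E, W' ⊆ W → D.Witness v w W' → W' = W) :
    W.Finite ∧ W.Nonempty :=
  minimal_witness_finite_of_rayless_general D hray hsep v w hne W hW hmin
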